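/- For any integer n ≥ 7, let G be an edge-colored complete 3-uniform hypergraph K_n^{(3)} that is rainbow ℒ-free. Then G contains no rainbow copy of the loose cycle C_3^{(3)}, no rainbow copy of the loose star S_3^{(3)}, and no rainbow copy of S_2^{(3)} ∪ S_1^{(3)}. -/
import Mathlib


/-- There is a rainbow loose path `ℒ` (edges `v₁v₂v₃, v₃v₄v₅, v₅v₆v₇`). -/
def HasRainbowLoose {n : ℕ} (c : Finset (Fin n) → ℕ) : Prop :=
  ∃ v : Fin 7 → Fin n, Function.Injective v ∧
    c {v 0, v 1, v 2} ≠ c {v 2, v 3, v 4} ∧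
    c {v 0, v 1, v 2} ≠ c {v 4, v 5, v 6} ∧
    c {v 2, v 3, v 4} ≠ c {v 4, v 5, v 6}

/-- There is a rainbow loose cycle `C₃^{(3)}` (edges `v₁v₂v₃, v₃v₄v₅, v₅v₆v₁`). -/
def HasRainbowLooseCycle {n : ℕ} (c : Finset (Fin n) → ℕ) : Prop :=
  ∃ v : Fin 6 → Fin n, Function.Injective v ∧
    c {v 0, v 1, v 2} ≠ c {v 2, v 3, v 4} ∧
    c {v 0, v 1, v 2} ≠ c {v 4, v 5, v 0} ∧
    c {v 2, v 3, v 4} ≠ c {v 4, v 5, v 0}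

/-- There is a rainbow loose star `S₃^{(3)}` (edges `v₀v₁v₂, v₀v₃v₄, v₀v₅v₆`). -/
def HasRainbowLooseStar {n : ℕ} (c : Finset (Fin n) → ℕ) : Prop :=
  ∃ v : Fin 7 → Fin n, Function.Injective v ∧
    c {v 0, v 1, v 2} ≠ c {v 0, v 3, v 4} ∧
    c {v 0, v 1, v 2} ≠ c {v 0, v 5, v 6} ∧
    c {v 0, v 3, v 4} ≠ c {v 0, v 5, v 6}

/-- There is a rainbow `S₂^{(3)} ∪ S₁^{(3)}` (edges `v₀v₁v₂, v₀v₃v₄` sharing the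
vertex `v₀`, plus a disjoint edge `v₅v₆v₇`). -/
def HasRainbowStarPlusEdge {n : ℕ} (c : Finset (Fin n) → ℕ) : Prop :=
  ∃ v : Fin 8 → Fin n, Function.Injective v ∧
    c {v 0, v 1, v 2} ≠ c {v 0, v 3, v 4} ∧
    c {v 0, v 1, v 2} ≠ c {v 5, v 6, v 7} ∧
    c {v 0, v 3, v 4} ≠ c {v 5, v 6, v 7}

lemma p213 {α : Type*} [DecidableEq α] (a b c : α) : ({a,b,c} : Finset α) = {b,a,c} :=
  Finset.insert_comm a b {c}

lemma p132 {α : Type*} [DecidableEq α] (a b c : α) : ({a,b,c} : Finset α) = {a,c,b} := by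
  rw [Finset.pair_comm]

lemma p231 {α : Type*} [DecidableEq α] (a b c : α) : ({a,b,c} : Finset α) = {b,c,a} := by
  rw [p213, p132]

lemma p312 {α : Type*} [DecidableEq α] (a b c : α) : ({a,b,c} : Finset α) = {c,a,b} := by
  rw [p132, p213]

lemma p321 {α : Type*} [DecidableEq α] (a b c : α) : ({a,b,c} : Finset α) = {c,b,a} := by
  rw [p132, p231]

lemma key {n : ℕ} (c : Finset (Fin n) → ℕ) (hfree : ¬ HasRainbowLoose c)
    (x0 x1 x2 x3 x4 x5 x6 : Fin n)
    (h01 : x0 ≠ x1) (h02 : x0 ≠ x2) (h03 : x0 ≠ x3) (h04 : x0 ≠ x4) (h05 : x0 ≠ x5) (h06 : x0 ≠ x6)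
    (h12 : x1 ≠ x2) (h13 : x1 ≠ x3) (h14 : x1 ≠ x4) (h15 : x1 ≠ x5) (h16 : x1 ≠ x6)
    (h23 : x2 ≠ x3) (h24 : x2 ≠ x4) (h25 : x2 ≠ x5) (h26 : x2 ≠ x6)
    (h34 : x3 ≠ x4) (h35 : x3 ≠ x5) (h36 : x3 ≠ x6)
    (h45 : x4 ≠ x5) (h46 : x4 ≠ x6)
    (h56 : x5 ≠ x6) :
    c {x0, x1, x2} = c {x2, x3, x4} ∨ c {x0, x1, x2} = c {x4, x5, x6} ∨
      c {x2, x3, x4} = c {x4, x5, x6} := by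
  by_contra hcon
  push_neg at hcon
  apply hfree
  have e0 : (![x0, x1, x2, x3, x4, x5, x6] : Fin 7 → Fin n) 0 = x0 := rfl
  have e1 : (![x0, x1, x2, x3, x4, x5, x6] : Fin 7 → Fin n) 1 = x1 := rfl
  have e2 : (![x0, x1, x2, x3, x4, x5, x6] : Fin 7 → Fin n) 2 = x2 := rfl
  have e3 : (![x0, x1, x2, x3, x4, x5, x6] : Fin 7 → Fin n) 3 = x3 := rfl
  have e4 : (![x0, x1, x2, x3, x4, x5, x6] : Fin 7 → Fin n) 4 = x4 := rfl
  have e5 : (![x0, x1, x2, x3, x4, x5, x6] : Fin 7 → Fin n) 5 = x5 := rfl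
  have e6 : (![x0, x1, x2, x3, x4, x5, x6] : Fin 7 → Fin n) 6 = x6 := rfl
  refine ⟨![x0, x1, x2, x3, x4, x5, x6], ?_, ?_, ?_, ?_⟩
  · intro i j hij
    fin_cases i <;> fin_cases j <;>
      simp_all [e0, e1, e2, e3, e4, e5, e6]
  · rw [e0, e1, e2, e3, e4]; exact hcon.1
  · rw [e0, e1, e2, e4, e5, e6]; exact hcon.2.1
  · rw [e2, e3, e4, e5, e6]; exact hcon.2.2

lemma extra {n : ℕ} (hn : 7 ≤ n) (v : Fin 6 → Fin n) :
    ∃ w : Fin n, ∀ i, v i ≠ w := by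
  have hc : (Finset.univ.image v).card < (Finset.univ : Finset (Fin n)).card := by
    calc (Finset.univ.image v).card ≤ (Finset.univ : Finset (Fin 6)).card :=
          Finset.card_image_le
      _ = 6 := by simp
      _ < n := by omega
      _ = (Finset.univ : Finset (Fin n)).card := by simp
  have hss : Finset.univ.image v ⊂ Finset.univ :=
    (Finset.ssubset_iff_of_subset (Finset.subset_univ _)).mpr (by
      by_contra h
      push_neg at h
      have : (Finset.univ : Finset (Fin n)) ⊆ Finset.univ.image v := fun x _ => h x (Finset.mem_univ x)
      exact absurd (Finset.card_le_card this) (by omega))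
  obtain ⟨w, _, hw⟩ := Finset.exists_of_ssubset hss
  exact ⟨w, fun i h => hw (Finset.mem_image.mpr ⟨i, Finset.mem_univ i, h⟩)⟩


/-- For `n ≥ 7`, a rainbow-`ℒ`-free edge-colored `K_n^{(3)}` contains no rainbow
`C₃^{(3)}`, no rainbow `S₃^{(3)}` and no rainbow `S₂^{(3)} ∪ S₁^{(3)}`. -/
theorem loose_free_no_rainbow_substructures (n : ℕ) (hn : 7 ≤ n)
    (c : Finset (Fin n) → ℕ) (hfree : ¬ HasRainbowLoose c) :
    ¬ HasRainbowLooseCycle c ∧ ¬ HasRainbowLooseStar c ∧ ¬ HasRainbowStarPlusEdge c := by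
  refine ⟨?_, ?_, ?_⟩
  · rintro ⟨v, hv, hd1, hd2, hd3⟩
    obtain ⟨w, hw⟩ := extra hn v
    rw [p312 (v 4) (v 5) (v 0)] at hd2 hd3
    have ne_0_1 : v 0 ≠ v 1 := hv.ne (by decide)
    have ne_0_2 : v 0 ≠ v 2 := hv.ne (by decide)
    have ne_0_3 : v 0 ≠ v 3 := hv.ne (by decide)
    have ne_0_4 : v 0 ≠ v 4 := hv.ne (by decide)
    have ne_0_5 : v 0 ≠ v 5 := hv.ne (by decide)
    have ne_0_6 : v 0 ≠ w := hw 0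
    have ne_1_2 : v 1 ≠ v 2 := hv.ne (by decide)
    have ne_1_3 : v 1 ≠ v 3 := hv.ne (by decide)
    have ne_1_4 : v 1 ≠ v 4 := hv.ne (by decide)
    have ne_1_5 : v 1 ≠ v 5 := hv.ne (by decide)
    have ne_1_6 : v 1 ≠ w := hw 1
    have ne_2_3 : v 2 ≠ v 3 := hv.ne (by decide)
    have ne_2_4 : v 2 ≠ v 4 := hv.ne (by decide)
    have ne_2_5 : v 2 ≠ v 5 := hv.ne (by decide)
    have ne_2_6 : v 2 ≠ w := hw 2
    have ne_3_4 : v 3 ≠ v 4 := hv.ne (by decide)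
    have ne_3_5 : v 3 ≠ v 5 := hv.ne (by decide)
    have ne_3_6 : v 3 ≠ w := hw 3
    have ne_4_5 : v 4 ≠ v 5 := hv.ne (by decide)
    have ne_4_6 : v 4 ≠ w := hw 4
    have ne_5_6 : v 5 ≠ w := hw 5
    have h0 := key c hfree (v 3) (v 4) (v 2) (v 0) (v 1) (v 5) w ne_3_4 (ne_2_3).symm (ne_0_3).symm (ne_1_3).symm ne_3_5 ne_3_6 (ne_2_4).symm (ne_0_4).symm (ne_1_4).symm ne_4_5 ne_4_6 (ne_0_2).symm (ne_1_2).symm ne_2_5 ne_2_6 ne_0_1 ne_0_5 ne_0_6 ne_1_5 ne_1_6 ne_5_6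
    rw [p312 (v 3) (v 4) (v 2), p231 (v 2) (v 0) (v 1)] at h0
    rcases h0 with h0 | h0 | h0
    · exact hd1 (h0.symm)
    · have h1 := key c hfree (v 3) (v 4) (v 2) (v 1) (v 0) (v 5) w ne_3_4 (ne_2_3).symm (ne_1_3).symm (ne_0_3).symm ne_3_5 ne_3_6 (ne_2_4).symm (ne_1_4).symm (ne_0_4).symm ne_4_5 ne_4_6 (ne_1_2).symm (ne_0_2).symm ne_2_5 ne_2_6 (ne_0_1).symm ne_1_5 ne_1_6 ne_0_5 ne_0_6 ne_5_6
      rw [p312 (v 3) (v 4) (v 2), p321 (v 2) (v 1) (v 0)] at h1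
      rcases h1 with h1 | h1 | h1
      · exact hd1 (h1.symm)
      · have h2 := key c hfree (v 1) (v 2) (v 0) (v 5) (v 4) (v 3) w ne_1_2 (ne_0_1).symm ne_1_5 ne_1_4 ne_1_3 ne_1_6 (ne_0_2).symm ne_2_5 ne_2_4 ne_2_3 ne_2_6 ne_0_5 ne_0_4 ne_0_3 ne_0_6 (ne_4_5).symm (ne_3_5).symm ne_5_6 (ne_3_4).symm ne_4_6 ne_3_6
        rw [p312 (v 1) (v 2) (v 0), p132 (v 0) (v 5) (v 4), p213 (v 4) (v 3) w] at h2
        rcases h2 with h2 | h2 | h2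
        · exact hd2 (h2)
        · have h3 := key c hfree (v 0) (v 5) (v 4) w (v 3) (v 1) (v 2) ne_0_5 ne_0_4 ne_0_6 ne_0_3 ne_0_1 ne_0_2 (ne_4_5).symm ne_5_6 (ne_3_5).symm (ne_1_5).symm (ne_2_5).symm ne_4_6 (ne_3_4).symm (ne_1_4).symm (ne_2_4).symm (ne_3_6).symm (ne_1_6).symm (ne_2_6).symm (ne_1_3).symm (ne_2_3).symm ne_1_2
          rw [p132 (v 0) (v 5) (v 4), p312 (v 4) w (v 3), p231 (v 3) (v 1) (v 2)] at h3
          rcases h3 with h3 | h3 | h3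
          · exact hd2 ((h2).trans h3.symm)
          · have h4 := key c hfree (v 0) (v 5) w (v 4) (v 3) (v 1) (v 2) ne_0_5 ne_0_6 ne_0_4 ne_0_3 ne_0_1 ne_0_2 ne_5_6 (ne_4_5).symm (ne_3_5).symm (ne_1_5).symm (ne_2_5).symm (ne_4_6).symm (ne_3_6).symm (ne_1_6).symm (ne_2_6).symm (ne_3_4).symm (ne_1_4).symm (ne_2_4).symm (ne_1_3).symm (ne_2_3).symm ne_1_2
            rw [p321 w (v 4) (v 3), p231 (v 3) (v 1) (v 2)] at h4
            rcases h4 with h4 | h4 | h4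
            · exact hd1 (((h2).trans h4.symm).trans h1.symm)
            · exact hd3 (((h1).trans h4).trans h3.symm)
            · exact hd2 (((h2).trans h4).trans h3.symm)
          · have h5 := key c hfree (v 0) (v 4) (v 5) w (v 1) (v 2) (v 3) ne_0_4 ne_0_5 ne_0_6 ne_0_1 ne_0_2 ne_0_3 ne_4_5 ne_4_6 (ne_1_4).symm (ne_2_4).symm (ne_3_4).symm ne_5_6 (ne_1_5).symm (ne_2_5).symm (ne_3_5).symm (ne_1_6).symm (ne_2_6).symm (ne_3_6).symm ne_1_2 ne_1_3 ne_2_3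
            rw [p312 (v 5) w (v 1)] at h5
            rcases h5 with h5 | h5 | h5
            · exact hd3 ((h0).trans h5.symm)
            · exact hd2 (((h2).trans h3).trans h5.symm)
            · exact hd1 ((((h2).trans h3).trans h5.symm).trans h0.symm)
        · have h6 := key c hfree (v 0) (v 2) (v 1) (v 5) w (v 3) (v 4) ne_0_2 ne_0_1 ne_0_5 ne_0_6 ne_0_3 ne_0_4 (ne_1_2).symm ne_2_5 ne_2_6 ne_2_3 ne_2_4 ne_1_5 ne_1_6 ne_1_3 ne_1_4 ne_5_6 (ne_3_5).symm (ne_4_5).symm (ne_3_6).symm (ne_4_6).symm ne_3_4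
          rw [p132 (v 0) (v 2) (v 1), p231 w (v 3) (v 4)] at h6
          rcases h6 with h6 | h6 | h6
          · exact hd1 ((h6).trans h0.symm)
          · exact hd2 ((h6).trans h2.symm)
          · exact hd3 (((h0).trans h6).trans h2.symm)
      · have h7 := key c hfree (v 0) (v 5) w (v 1) (v 3) (v 2) (v 4) ne_0_5 ne_0_6 ne_0_1 ne_0_3 ne_0_2 ne_0_4 ne_5_6 (ne_1_5).symm (ne_3_5).symm (ne_2_5).symm (ne_4_5).symm (ne_1_6).symm (ne_3_6).symm (ne_2_6).symm (ne_4_6).symm ne_1_3 ne_1_2 ne_1_4 (ne_2_3).symm ne_3_4 ne_2_4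
        rw [p231 w (v 1) (v 3), p213 (v 3) (v 2) (v 4)] at h7
        rcases h7 with h7 | h7 | h7
        · have h8 := key c hfree (v 0) (v 5) (v 4) (v 2) (v 3) (v 1) w ne_0_5 ne_0_4 ne_0_2 ne_0_3 ne_0_1 ne_0_6 (ne_4_5).symm (ne_2_5).symm (ne_3_5).symm (ne_1_5).symm ne_5_6 (ne_2_4).symm (ne_3_4).symm (ne_1_4).symm ne_4_6 ne_2_3 (ne_1_2).symm ne_2_6 (ne_1_3).symm ne_3_6 ne_1_6
          rw [p132 (v 0) (v 5) (v 4), p231 (v 4) (v 2) (v 3), p213 (v 3) (v 1) w] at h8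
          rcases h8 with h8 | h8 | h8
          · exact hd3 (h8.symm)
          · exact hd2 (((h1).trans h7).trans h8.symm)
          · exact hd1 (((h1).trans h7).trans h8.symm)
        · exact hd1 ((h1).trans h7)
        · have h9 := key c hfree (v 3) w (v 1) (v 2) (v 0) (v 4) (v 5) ne_3_6 (ne_1_3).symm (ne_2_3).symm (ne_0_3).symm ne_3_4 ne_3_5 (ne_1_6).symm (ne_2_6).symm (ne_0_6).symm (ne_4_6).symm (ne_5_6).symm ne_1_2 (ne_0_1).symm ne_1_4 ne_1_5 (ne_0_2).symm ne_2_4 ne_2_5 ne_0_4 ne_0_5 ne_4_5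
          rw [p312 (v 3) w (v 1), p312 (v 1) (v 2) (v 0)] at h9
          rcases h9 with h9 | h9 | h9
          · exact hd1 ((h9.symm).trans h7)
          · exact hd3 ((h7.symm).trans h9)
          · exact hd2 (h9)
    · have h10 := key c hfree (v 1) w (v 5) (v 0) (v 4) (v 2) (v 3) ne_1_6 ne_1_5 (ne_0_1).symm ne_1_4 ne_1_2 ne_1_3 (ne_5_6).symm (ne_0_6).symm (ne_4_6).symm (ne_2_6).symm (ne_3_6).symm (ne_0_5).symm (ne_4_5).symm (ne_2_5).symm (ne_3_5).symm ne_0_4 ne_0_2 ne_0_3 (ne_2_4).symm (ne_3_4).symm ne_2_3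
      rw [p132 (v 1) w (v 5), p231 (v 5) (v 0) (v 4), p231 (v 4) (v 2) (v 3)] at h10
      rcases h10 with h10 | h10 | h10
      · exact hd2 ((h0).trans h10)
      · exact hd1 ((h0).trans h10)
      · exact hd3 (h10.symm)
  · rintro ⟨v, hv, hd1, hd2, hd3⟩
    have ne_0_1 : v 0 ≠ v 1 := hv.ne (by decide)
    have ne_0_2 : v 0 ≠ v 2 := hv.ne (by decide)
    have ne_0_3 : v 0 ≠ v 3 := hv.ne (by decide)
    have ne_0_4 : v 0 ≠ v 4 := hv.ne (by decide)
    have ne_0_5 : v 0 ≠ v 5 := hv.ne (by decide)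
    have ne_0_6 : v 0 ≠ v 6 := hv.ne (by decide)
    have ne_1_2 : v 1 ≠ v 2 := hv.ne (by decide)
    have ne_1_3 : v 1 ≠ v 3 := hv.ne (by decide)
    have ne_1_4 : v 1 ≠ v 4 := hv.ne (by decide)
    have ne_1_5 : v 1 ≠ v 5 := hv.ne (by decide)
    have ne_1_6 : v 1 ≠ v 6 := hv.ne (by decide)
    have ne_2_3 : v 2 ≠ v 3 := hv.ne (by decide)
    have ne_2_4 : v 2 ≠ v 4 := hv.ne (by decide)
    have ne_2_5 : v 2 ≠ v 5 := hv.ne (by decide)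
    have ne_2_6 : v 2 ≠ v 6 := hv.ne (by decide)
    have ne_3_4 : v 3 ≠ v 4 := hv.ne (by decide)
    have ne_3_5 : v 3 ≠ v 5 := hv.ne (by decide)
    have ne_3_6 : v 3 ≠ v 6 := hv.ne (by decide)
    have ne_4_5 : v 4 ≠ v 5 := hv.ne (by decide)
    have ne_4_6 : v 4 ≠ v 6 := hv.ne (by decide)
    have ne_5_6 : v 5 ≠ v 6 := hv.ne (by decide)
    have h0 := key c hfree (v 1) (v 2) (v 4) (v 3) (v 0) (v 5) (v 6) ne_1_2 ne_1_4 ne_1_3 (ne_0_1).symm ne_1_5 ne_1_6 ne_2_4 ne_2_3 (ne_0_2).symm ne_2_5 ne_2_6 (ne_3_4).symm (ne_0_4).symm ne_4_5 ne_4_6 (ne_0_3).symm ne_3_5 ne_3_6 ne_0_5 ne_0_6 ne_5_6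
    rw [p321 (v 4) (v 3) (v 0)] at h0
    rcases h0 with h0 | h0 | h0
    · have h1 := key c hfree (v 0) (v 6) (v 5) (v 3) (v 2) (v 1) (v 4) ne_0_6 ne_0_5 ne_0_3 ne_0_2 ne_0_1 ne_0_4 (ne_5_6).symm (ne_3_6).symm (ne_2_6).symm (ne_1_6).symm (ne_4_6).symm (ne_3_5).symm (ne_2_5).symm (ne_1_5).symm (ne_4_5).symm (ne_2_3).symm (ne_1_3).symm ne_3_4 (ne_1_2).symm ne_2_4 ne_1_4
      rw [p132 (v 0) (v 6) (v 5), p321 (v 5) (v 3) (v 2), p213 (v 2) (v 1) (v 4)] at h1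
      rcases h1 with h1 | h1 | h1
      · have h2 := key c hfree (v 1) (v 2) (v 0) (v 3) (v 4) (v 5) (v 6) ne_1_2 (ne_0_1).symm ne_1_3 ne_1_4 ne_1_5 ne_1_6 (ne_0_2).symm ne_2_3 ne_2_4 ne_2_5 ne_2_6 ne_0_3 ne_0_4 ne_0_5 ne_0_6 ne_3_4 ne_3_5 ne_3_6 ne_4_5 ne_4_6 ne_5_6
        rw [p312 (v 1) (v 2) (v 0)] at h2
        rcases h2 with h2 | h2 | h2
        · exact hd1 (h2)
        · have h3 := key c hfree (v 0) (v 1) (v 6) (v 4) (v 5) (v 2) (v 3) ne_0_1 ne_0_6 ne_0_4 ne_0_5 ne_0_2 ne_0_3 ne_1_6 ne_1_4 ne_1_5 ne_1_2 ne_1_3 (ne_4_6).symm (ne_5_6).symm (ne_2_6).symm (ne_3_6).symm ne_4_5 (ne_2_4).symm (ne_3_4).symm (ne_2_5).symm (ne_3_5).symm ne_2_3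
          rw [p231 (v 6) (v 4) (v 5), p231 (v 5) (v 2) (v 3)] at h3
          rcases h3 with h3 | h3 | h3
          · have h4 := key c hfree (v 0) (v 6) (v 1) (v 4) (v 2) (v 3) (v 5) ne_0_6 ne_0_1 ne_0_4 ne_0_2 ne_0_3 ne_0_5 (ne_1_6).symm (ne_4_6).symm (ne_2_6).symm (ne_3_6).symm (ne_5_6).symm ne_1_4 ne_1_2 ne_1_3 ne_1_5 (ne_2_4).symm (ne_3_4).symm ne_4_5 ne_2_3 ne_2_5 ne_3_5
            rw [p132 (v 0) (v 6) (v 1), p132 (v 1) (v 4) (v 2)] at h4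
            rcases h4 with h4 | h4 | h4
            · exact hd1 ((((h2).trans h3.symm).trans h4).trans h0)
            · exact hd2 ((((h2).trans h3.symm).trans h4).trans h1.symm)
            · exact hd3 (((h0.symm).trans h4).trans h1.symm)
          · have h5 := key c hfree (v 0) (v 3) (v 1) (v 2) (v 4) (v 5) (v 6) ne_0_3 ne_0_1 ne_0_2 ne_0_4 ne_0_5 ne_0_6 (ne_1_3).symm (ne_2_3).symm ne_3_4 ne_3_5 ne_3_6 ne_1_2 ne_1_4 ne_1_5 ne_1_6 ne_2_4 ne_2_5 ne_2_6 ne_4_5 ne_4_6 ne_5_6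
            rw [p132 (v 0) (v 3) (v 1)] at h5
            rcases h5 with h5 | h5 | h5
            · have h6 := key c hfree (v 0) (v 1) (v 3) (v 2) (v 5) (v 4) (v 6) ne_0_1 ne_0_3 ne_0_2 ne_0_5 ne_0_4 ne_0_6 ne_1_3 ne_1_2 ne_1_5 ne_1_4 ne_1_6 (ne_2_3).symm ne_3_5 ne_3_4 ne_3_6 ne_2_5 ne_2_4 ne_2_6 (ne_4_5).symm ne_5_6 ne_4_6
              rw [p213 (v 3) (v 2) (v 5), p213 (v 5) (v 4) (v 6)] at h6
              rcases h6 with h6 | h6 | h6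
              · exact hd3 ((((h0.symm).trans h5.symm).trans h6).trans h1.symm)
              · exact hd1 ((((h2).trans h6.symm).trans h5).trans h0)
              · exact hd2 (((h2).trans h6.symm).trans h1.symm)
            · have h7 := key c hfree (v 2) (v 4) (v 1) (v 3) (v 0) (v 5) (v 6) ne_2_4 (ne_1_2).symm ne_2_3 (ne_0_2).symm ne_2_5 ne_2_6 (ne_1_4).symm (ne_3_4).symm (ne_0_4).symm ne_4_5 ne_4_6 ne_1_3 (ne_0_1).symm ne_1_5 ne_1_6 (ne_0_3).symm ne_3_5 ne_3_6 ne_0_5 ne_0_6 ne_5_6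
              rw [p312 (v 2) (v 4) (v 1), p312 (v 1) (v 3) (v 0)] at h7
              rcases h7 with h7 | h7 | h7
              · exact hd1 ((((h2).trans h5.symm).trans h7.symm).trans h0)
              · exact hd3 ((h0.symm).trans h7)
              · exact hd2 (((h2).trans h5.symm).trans h7)
            · exact hd1 (((h2).trans h5.symm).trans h0)
          · exact hd2 (((h2).trans h3).trans h1.symm)
        · have h8 := key c hfree (v 0) (v 1) (v 2) (v 3) (v 5) (v 4) (v 6) ne_0_1 ne_0_2 ne_0_3 ne_0_5 ne_0_4 ne_0_6 ne_1_2 ne_1_3 ne_1_5 ne_1_4 ne_1_6 ne_2_3 ne_2_5 ne_2_4 ne_2_6 ne_3_5 ne_3_4 ne_3_6 (ne_4_5).symm ne_5_6 ne_4_6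
          rw [p213 (v 5) (v 4) (v 6)] at h8
          rcases h8 with h8 | h8 | h8
          · exact hd2 ((h8).trans h1.symm)
          · exact hd1 ((h8).trans h2.symm)
          · exact hd3 (((h2).trans h8.symm).trans h1.symm)
      · exact hd3 ((h0.symm).trans h1.symm)
      · have h9 := key c hfree (v 1) (v 4) (v 6) (v 0) (v 5) (v 2) (v 3) ne_1_4 ne_1_6 (ne_0_1).symm ne_1_5 ne_1_2 ne_1_3 ne_4_6 (ne_0_4).symm ne_4_5 (ne_2_4).symm (ne_3_4).symm (ne_0_6).symm (ne_5_6).symm (ne_2_6).symm (ne_3_6).symm ne_0_5 ne_0_2 ne_0_3 (ne_2_5).symm (ne_3_5).symm ne_2_3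
        rw [p231 (v 6) (v 0) (v 5), p231 (v 5) (v 2) (v 3)] at h9
        rcases h9 with h9 | h9 | h9
        · have h10 := key c hfree (v 3) (v 5) (v 2) (v 0) (v 1) (v 4) (v 6) ne_3_5 (ne_2_3).symm (ne_0_3).symm (ne_1_3).symm ne_3_4 ne_3_6 (ne_2_5).symm (ne_0_5).symm (ne_1_5).symm (ne_4_5).symm ne_5_6 (ne_0_2).symm (ne_1_2).symm ne_2_4 ne_2_6 ne_0_1 ne_0_4 ne_0_6 ne_1_4 ne_1_6 ne_4_6
          rw [p312 (v 3) (v 5) (v 2), p231 (v 2) (v 0) (v 1)] at h10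
          rcases h10 with h10 | h10 | h10
          · exact hd1 (((h10.symm).trans h1).trans h0)
          · exact hd3 ((((h0.symm).trans h1.symm).trans h10).trans h9)
          · exact hd2 ((h10).trans h9)
        · have h11 := key c hfree (v 0) (v 2) (v 1) (v 6) (v 4) (v 3) (v 5) ne_0_2 ne_0_1 ne_0_6 ne_0_4 ne_0_3 ne_0_5 (ne_1_2).symm ne_2_6 ne_2_4 ne_2_3 ne_2_5 ne_1_6 ne_1_4 ne_1_3 ne_1_5 (ne_4_6).symm (ne_3_6).symm (ne_5_6).symm (ne_3_4).symm ne_4_5 ne_3_5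
          rw [p132 (v 0) (v 2) (v 1), p132 (v 1) (v 6) (v 4), p213 (v 4) (v 3) (v 5)] at h11
          rcases h11 with h11 | h11 | h11
          · exact hd1 ((((h11).trans h9).trans h1).trans h0)
          · have h12 := key c hfree (v 0) (v 6) (v 5) (v 3) (v 4) (v 1) (v 2) ne_0_6 ne_0_5 ne_0_3 ne_0_4 ne_0_1 ne_0_2 (ne_5_6).symm (ne_3_6).symm (ne_4_6).symm (ne_1_6).symm (ne_2_6).symm (ne_3_5).symm (ne_4_5).symm (ne_1_5).symm (ne_2_5).symm ne_3_4 (ne_1_3).symm (ne_2_3).symm (ne_1_4).symm (ne_2_4).symm ne_1_2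
            rw [p132 (v 0) (v 6) (v 5), p231 (v 5) (v 3) (v 4), p231 (v 4) (v 1) (v 2)] at h12
            rcases h12 with h12 | h12 | h12
            · exact hd2 ((h11).trans h12.symm)
            · exact hd3 ((h0.symm).trans h12.symm)
            · exact hd1 (((h11).trans h12).trans h0)
          · have h13 := key c hfree (v 1) (v 2) (v 0) (v 6) (v 5) (v 3) (v 4) ne_1_2 (ne_0_1).symm ne_1_6 ne_1_5 ne_1_3 ne_1_4 (ne_0_2).symm ne_2_6 ne_2_5 ne_2_3 ne_2_4 ne_0_6 ne_0_5 ne_0_3 ne_0_4 (ne_5_6).symm (ne_3_6).symm (ne_4_6).symm (ne_3_5).symm (ne_4_5).symm ne_3_4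
            rw [p312 (v 1) (v 2) (v 0), p132 (v 0) (v 6) (v 5), p231 (v 5) (v 3) (v 4)] at h13
            rcases h13 with h13 | h13 | h13
            · exact hd2 (h13)
            · exact hd1 (((((h13).trans h11.symm).trans h9).trans h1).trans h0)
            · exact hd3 (((((h0.symm).trans h1.symm).trans h9.symm).trans h11).trans h13.symm)
        · exact hd3 (((h0.symm).trans h1.symm).trans h9.symm)
    · have h14 := key c hfree (v 1) (v 2) (v 0) (v 6) (v 5) (v 3) (v 4) ne_1_2 (ne_0_1).symm ne_1_6 ne_1_5 ne_1_3 ne_1_4 (ne_0_2).symm ne_2_6 ne_2_5 ne_2_3 ne_2_4 ne_0_6 ne_0_5 ne_0_3 ne_0_4 (ne_5_6).symm (ne_3_6).symm (ne_4_6).symm (ne_3_5).symm (ne_4_5).symm ne_3_4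
      rw [p312 (v 1) (v 2) (v 0), p132 (v 0) (v 6) (v 5), p231 (v 5) (v 3) (v 4)] at h14
      rcases h14 with h14 | h14 | h14
      · exact hd2 (h14)
      · have h15 := key c hfree (v 0) (v 3) (v 4) (v 2) (v 1) (v 5) (v 6) ne_0_3 ne_0_4 ne_0_2 ne_0_1 ne_0_5 ne_0_6 ne_3_4 (ne_2_3).symm (ne_1_3).symm ne_3_5 ne_3_6 (ne_2_4).symm (ne_1_4).symm ne_4_5 ne_4_6 (ne_1_2).symm ne_2_5 ne_2_6 ne_1_5 ne_1_6 ne_5_6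
        rw [p321 (v 4) (v 2) (v 1)] at h15
        rcases h15 with h15 | h15 | h15
        · exact hd3 ((h15).trans h0)
        · have h16 := key c hfree (v 1) (v 2) (v 4) (v 0) (v 3) (v 5) (v 6) ne_1_2 ne_1_4 (ne_0_1).symm ne_1_3 ne_1_5 ne_1_6 ne_2_4 (ne_0_2).symm ne_2_3 ne_2_5 ne_2_6 (ne_0_4).symm (ne_3_4).symm ne_4_5 ne_4_6 ne_0_3 ne_0_5 ne_0_6 ne_3_5 ne_3_6 ne_5_6
          rw [p231 (v 4) (v 0) (v 3)] at h16
          rcases h16 with h16 | h16 | h16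
          · exact hd3 ((h16.symm).trans h0)
          · have h17 := key c hfree (v 1) (v 2) (v 0) (v 4) (v 3) (v 5) (v 6) ne_1_2 (ne_0_1).symm ne_1_4 ne_1_3 ne_1_5 ne_1_6 (ne_0_2).symm ne_2_4 ne_2_3 ne_2_5 ne_2_6 ne_0_4 ne_0_3 ne_0_5 ne_0_6 (ne_3_4).symm ne_4_5 ne_4_6 ne_3_5 ne_3_6 ne_5_6
            rw [p312 (v 1) (v 2) (v 0), p132 (v 0) (v 4) (v 3)] at h17
            rcases h17 with h17 | h17 | h17
            · exact hd1 (h17)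
            · exact hd2 (((h17).trans h16.symm).trans h0)
            · exact hd3 (((h17).trans h16.symm).trans h0)
          · have h18 := key c hfree (v 0) (v 3) (v 6) (v 5) (v 1) (v 2) (v 4) ne_0_3 ne_0_6 ne_0_5 ne_0_1 ne_0_2 ne_0_4 ne_3_6 ne_3_5 (ne_1_3).symm (ne_2_3).symm ne_3_4 (ne_5_6).symm (ne_1_6).symm (ne_2_6).symm (ne_4_6).symm (ne_1_5).symm (ne_2_5).symm (ne_4_5).symm ne_1_2 ne_1_4 ne_2_4
            rw [p321 (v 6) (v 5) (v 1)] at h18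
            rcases h18 with h18 | h18 | h18
            · have h19 := key c hfree (v 0) (v 6) (v 3) (v 5) (v 4) (v 1) (v 2) ne_0_6 ne_0_3 ne_0_5 ne_0_4 ne_0_1 ne_0_2 (ne_3_6).symm (ne_5_6).symm (ne_4_6).symm (ne_1_6).symm (ne_2_6).symm ne_3_5 ne_3_4 (ne_1_3).symm (ne_2_3).symm (ne_4_5).symm (ne_1_5).symm (ne_2_5).symm (ne_1_4).symm (ne_2_4).symm ne_1_2
              rw [p132 (v 0) (v 6) (v 3), p132 (v 3) (v 5) (v 4), p231 (v 4) (v 1) (v 2)] at h19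
              rcases h19 with h19 | h19 | h19
              · exact hd1 ((((h14).trans h19.symm).trans h18).trans h15.symm)
              · exact hd3 ((((h15).trans h18.symm).trans h19).trans h0)
              · exact hd2 (((h14).trans h19).trans h0)
            · have h20 := key c hfree (v 0) (v 1) (v 2) (v 4) (v 6) (v 3) (v 5) ne_0_1 ne_0_2 ne_0_4 ne_0_6 ne_0_3 ne_0_5 ne_1_2 ne_1_4 ne_1_6 ne_1_3 ne_1_5 ne_2_4 ne_2_6 ne_2_3 ne_2_5 ne_4_6 (ne_3_4).symm ne_4_5 (ne_3_6).symm (ne_5_6).symm ne_3_5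
              rw [p231 (v 6) (v 3) (v 5)] at h20
              rcases h20 with h20 | h20 | h20
              · have h21 := key c hfree (v 0) (v 2) (v 1) (v 4) (v 3) (v 5) (v 6) ne_0_2 ne_0_1 ne_0_4 ne_0_3 ne_0_5 ne_0_6 (ne_1_2).symm ne_2_4 ne_2_3 ne_2_5 ne_2_6 ne_1_4 ne_1_3 ne_1_5 ne_1_6 (ne_3_4).symm ne_4_5 ne_4_6 ne_3_5 ne_3_6 ne_5_6
                rw [p132 (v 0) (v 2) (v 1), p132 (v 1) (v 4) (v 3)] at h21
                rcases h21 with h21 | h21 | h21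
                · have h22 := key c hfree (v 1) (v 4) (v 2) (v 0) (v 3) (v 5) (v 6) ne_1_4 ne_1_2 (ne_0_1).symm ne_1_3 ne_1_5 ne_1_6 (ne_2_4).symm (ne_0_4).symm (ne_3_4).symm ne_4_5 ne_4_6 (ne_0_2).symm ne_2_3 ne_2_5 ne_2_6 ne_0_3 ne_0_5 ne_0_6 ne_3_5 ne_3_6 ne_5_6
                  rw [p132 (v 1) (v 4) (v 2), p213 (v 2) (v 0) (v 3)] at h22
                  rcases h22 with h22 | h22 | h22
                  · have h23 := key c hfree (v 0) (v 2) (v 3) (v 4) (v 1) (v 5) (v 6) ne_0_2 ne_0_3 ne_0_4 ne_0_1 ne_0_5 ne_0_6 ne_2_3 ne_2_4 (ne_1_2).symm ne_2_5 ne_2_6 ne_3_4 (ne_1_3).symm ne_3_5 ne_3_6 (ne_1_4).symm ne_4_5 ne_4_6 ne_1_5 ne_1_6 ne_5_6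
                    rw [p312 (v 3) (v 4) (v 1)] at h23
                    rcases h23 with h23 | h23 | h23
                    · exact hd2 ((((h21).trans h23.symm).trans h22.symm).trans h0)
                    · exact hd3 ((((h15).trans h23.symm).trans h22.symm).trans h0)
                    · exact hd1 (((h21).trans h23).trans h15.symm)
                  · exact hd3 (((h16).trans h22.symm).trans h0)
                  · have h24 := key c hfree (v 1) (v 4) (v 3) (v 2) (v 0) (v 5) (v 6) ne_1_4 ne_1_3 ne_1_2 (ne_0_1).symm ne_1_5 ne_1_6 (ne_3_4).symm (ne_2_4).symm (ne_0_4).symm ne_4_5 ne_4_6 (ne_2_3).symm (ne_0_3).symm ne_3_5 ne_3_6 (ne_0_2).symm ne_2_5 ne_2_6 ne_0_5 ne_0_6 ne_5_6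
                    rw [p132 (v 1) (v 4) (v 3), p321 (v 3) (v 2) (v 0)] at h24
                    rcases h24 with h24 | h24 | h24
                    · exact hd1 ((((h21).trans h24).trans h22).trans h16.symm)
                    · exact hd2 ((h21).trans h24)
                    · exact hd3 (((h16).trans h22.symm).trans h24)
                · exact hd1 ((h21).trans h16.symm)
                · have h25 := key c hfree (v 0) (v 5) (v 6) (v 2) (v 4) (v 1) (v 3) ne_0_5 ne_0_6 ne_0_2 ne_0_4 ne_0_1 ne_0_3 ne_5_6 (ne_2_5).symm (ne_4_5).symm (ne_1_5).symm (ne_3_5).symm (ne_2_6).symm (ne_4_6).symm (ne_1_6).symm (ne_3_6).symm ne_2_4 (ne_1_2).symm ne_2_3 (ne_1_4).symm (ne_3_4).symm ne_1_3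
                  rw [p231 (v 6) (v 2) (v 4), p231 (v 4) (v 1) (v 3)] at h25
                  rcases h25 with h25 | h25 | h25
                  · exact hd2 ((h20).trans h25.symm)
                  · exact hd3 (((h16).trans h21.symm).trans h25.symm)
                  · exact hd1 ((((h20).trans h25).trans h21).trans h16.symm)
              · exact hd1 ((h20).trans h16.symm)
              · have h26 := key c hfree (v 1) (v 2) (v 0) (v 4) (v 5) (v 3) (v 6) ne_1_2 (ne_0_1).symm ne_1_4 ne_1_5 ne_1_3 ne_1_6 (ne_0_2).symm ne_2_4 ne_2_5 ne_2_3 ne_2_6 ne_0_4 ne_0_5 ne_0_3 ne_0_6 ne_4_5 (ne_3_4).symm ne_4_6 (ne_3_5).symm ne_5_6 ne_3_6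
                rw [p312 (v 1) (v 2) (v 0), p213 (v 5) (v 3) (v 6)] at h26
                rcases h26 with h26 | h26 | h26
                · have h27 := key c hfree (v 1) (v 2) (v 4) (v 0) (v 5) (v 3) (v 6) ne_1_2 ne_1_4 (ne_0_1).symm ne_1_5 ne_1_3 ne_1_6 ne_2_4 (ne_0_2).symm ne_2_5 ne_2_3 ne_2_6 (ne_0_4).symm ne_4_5 (ne_3_4).symm ne_4_6 ne_0_5 ne_0_3 ne_0_6 (ne_3_5).symm ne_5_6 ne_3_6
                  rw [p213 (v 4) (v 0) (v 5), p213 (v 5) (v 3) (v 6)] at h27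
                  rcases h27 with h27 | h27 | h27
                  · exact hd2 (((h26).trans h27.symm).trans h0)
                  · exact hd3 (((h16).trans h27.symm).trans h0)
                  · exact hd1 (((h26).trans h27).trans h16.symm)
                · exact hd1 ((h26).trans h16.symm)
                · have h28 := key c hfree (v 0) (v 1) (v 6) (v 2) (v 4) (v 3) (v 5) ne_0_1 ne_0_6 ne_0_2 ne_0_4 ne_0_3 ne_0_5 ne_1_6 ne_1_2 ne_1_4 ne_1_3 ne_1_5 (ne_2_6).symm (ne_4_6).symm (ne_3_6).symm (ne_5_6).symm ne_2_4 ne_2_3 ne_2_5 (ne_3_4).symm ne_4_5 ne_3_5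
                  rw [p231 (v 6) (v 2) (v 4), p213 (v 4) (v 3) (v 5)] at h28
                  rcases h28 with h28 | h28 | h28
                  · have h29 := key c hfree (v 0) (v 6) (v 1) (v 2) (v 4) (v 3) (v 5) ne_0_6 ne_0_1 ne_0_2 ne_0_4 ne_0_3 ne_0_5 (ne_1_6).symm (ne_2_6).symm (ne_4_6).symm (ne_3_6).symm (ne_5_6).symm ne_1_2 ne_1_4 ne_1_3 ne_1_5 ne_2_4 ne_2_3 ne_2_5 (ne_3_4).symm ne_4_5 ne_3_5
                    rw [p132 (v 0) (v 6) (v 1), p213 (v 4) (v 3) (v 5)] at h29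
                    rcases h29 with h29 | h29 | h29
                    · exact hd3 (((((h16).trans h20.symm).trans h28.symm).trans h29).trans h0)
                    · exact hd1 (((((h14).trans h29.symm).trans h28).trans h20).trans h16.symm)
                    · exact hd2 (((h14).trans h29.symm).trans h0)
                  · have h30 := key c hfree (v 2) (v 4) (v 1) (v 0) (v 6) (v 3) (v 5) ne_2_4 (ne_1_2).symm (ne_0_2).symm ne_2_6 ne_2_3 ne_2_5 (ne_1_4).symm (ne_0_4).symm ne_4_6 (ne_3_4).symm ne_4_5 (ne_0_1).symm ne_1_6 ne_1_3 ne_1_5 ne_0_6 ne_0_3 ne_0_5 (ne_3_6).symm (ne_5_6).symm ne_3_5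
                    rw [p312 (v 2) (v 4) (v 1), p213 (v 1) (v 0) (v 6), p231 (v 6) (v 3) (v 5)] at h30
                    rcases h30 with h30 | h30 | h30
                    · exact hd2 ((((h14).trans h28.symm).trans h30.symm).trans h0)
                    · exact hd3 (((h16).trans h30.symm).trans h0)
                    · exact hd1 ((((h14).trans h28.symm).trans h30).trans h16.symm)
                  · exact hd1 ((((h14).trans h28.symm).trans h20).trans h16.symm)
            · exact hd3 (((h15).trans h18).trans h0)
        · have h31 := key c hfree (v 3) (v 4) (v 0) (v 2) (v 1) (v 5) (v 6) ne_3_4 (ne_0_3).symm (ne_2_3).symm (ne_1_3).symm ne_3_5 ne_3_6 (ne_0_4).symm (ne_2_4).symm (ne_1_4).symm ne_4_5 ne_4_6 ne_0_2 ne_0_1 ne_0_5 ne_0_6 (ne_1_2).symm ne_2_5 ne_2_6 ne_1_5 ne_1_6 ne_5_6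
          rw [p312 (v 3) (v 4) (v 0), p132 (v 0) (v 2) (v 1)] at h31
          rcases h31 with h31 | h31 | h31
          · exact hd1 (h31.symm)
          · exact hd3 (((h31).trans h15.symm).trans h0)
          · exact hd2 (((h31).trans h15.symm).trans h0)
      · have h32 := key c hfree (v 0) (v 3) (v 4) (v 2) (v 1) (v 5) (v 6) ne_0_3 ne_0_4 ne_0_2 ne_0_1 ne_0_5 ne_0_6 ne_3_4 (ne_2_3).symm (ne_1_3).symm ne_3_5 ne_3_6 (ne_2_4).symm (ne_1_4).symm ne_4_5 ne_4_6 (ne_1_2).symm ne_2_5 ne_2_6 ne_1_5 ne_1_6 ne_5_6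
        rw [p321 (v 4) (v 2) (v 1)] at h32
        rcases h32 with h32 | h32 | h32
        · exact hd3 ((h32).trans h0)
        · have h33 := key c hfree (v 0) (v 2) (v 1) (v 6) (v 5) (v 3) (v 4) ne_0_2 ne_0_1 ne_0_6 ne_0_5 ne_0_3 ne_0_4 (ne_1_2).symm ne_2_6 ne_2_5 ne_2_3 ne_2_4 ne_1_6 ne_1_5 ne_1_3 ne_1_4 (ne_5_6).symm (ne_3_6).symm (ne_4_6).symm (ne_3_5).symm (ne_4_5).symm ne_3_4
          rw [p132 (v 0) (v 2) (v 1), p132 (v 1) (v 6) (v 5), p231 (v 5) (v 3) (v 4)] at h33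
          rcases h33 with h33 | h33 | h33
          · exact hd1 ((h33).trans h32.symm)
          · exact hd2 ((h33).trans h14.symm)
          · exact hd3 (((h32).trans h33).trans h14.symm)
        · have h34 := key c hfree (v 3) (v 4) (v 0) (v 2) (v 1) (v 5) (v 6) ne_3_4 (ne_0_3).symm (ne_2_3).symm (ne_1_3).symm ne_3_5 ne_3_6 (ne_0_4).symm (ne_2_4).symm (ne_1_4).symm ne_4_5 ne_4_6 ne_0_2 ne_0_1 ne_0_5 ne_0_6 (ne_1_2).symm ne_2_5 ne_2_6 ne_1_5 ne_1_6 ne_5_6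
          rw [p312 (v 3) (v 4) (v 0), p132 (v 0) (v 2) (v 1)] at h34
          rcases h34 with h34 | h34 | h34
          · exact hd1 (h34.symm)
          · exact hd3 (((h34).trans h32.symm).trans h0)
          · exact hd2 (((h34).trans h32.symm).trans h0)
    · exact hd3 (h0)
  · rintro ⟨v, hv, hd1, hd2, hd3⟩
    have ne_0_1 : v 0 ≠ v 1 := hv.ne (by decide)
    have ne_0_2 : v 0 ≠ v 2 := hv.ne (by decide)
    have ne_0_3 : v 0 ≠ v 3 := hv.ne (by decide)
    have ne_0_4 : v 0 ≠ v 4 := hv.ne (by decide)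
    have ne_0_5 : v 0 ≠ v 5 := hv.ne (by decide)
    have ne_0_6 : v 0 ≠ v 6 := hv.ne (by decide)
    have ne_0_7 : v 0 ≠ v 7 := hv.ne (by decide)
    have ne_1_2 : v 1 ≠ v 2 := hv.ne (by decide)
    have ne_1_3 : v 1 ≠ v 3 := hv.ne (by decide)
    have ne_1_4 : v 1 ≠ v 4 := hv.ne (by decide)
    have ne_1_5 : v 1 ≠ v 5 := hv.ne (by decide)
    have ne_1_6 : v 1 ≠ v 6 := hv.ne (by decide)
    have ne_1_7 : v 1 ≠ v 7 := hv.ne (by decide)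
    have ne_2_3 : v 2 ≠ v 3 := hv.ne (by decide)
    have ne_2_4 : v 2 ≠ v 4 := hv.ne (by decide)
    have ne_2_5 : v 2 ≠ v 5 := hv.ne (by decide)
    have ne_2_6 : v 2 ≠ v 6 := hv.ne (by decide)
    have ne_2_7 : v 2 ≠ v 7 := hv.ne (by decide)
    have ne_3_4 : v 3 ≠ v 4 := hv.ne (by decide)
    have ne_3_5 : v 3 ≠ v 5 := hv.ne (by decide)
    have ne_3_6 : v 3 ≠ v 6 := hv.ne (by decide)
    have ne_3_7 : v 3 ≠ v 7 := hv.ne (by decide)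
    have ne_4_5 : v 4 ≠ v 5 := hv.ne (by decide)
    have ne_4_6 : v 4 ≠ v 6 := hv.ne (by decide)
    have ne_4_7 : v 4 ≠ v 7 := hv.ne (by decide)
    have ne_5_6 : v 5 ≠ v 6 := hv.ne (by decide)
    have ne_5_7 : v 5 ≠ v 7 := hv.ne (by decide)
    have ne_6_7 : v 6 ≠ v 7 := hv.ne (by decide)
    have h0 := key c hfree (v 0) (v 2) (v 1) (v 3) (v 7) (v 5) (v 6) ne_0_2 ne_0_1 ne_0_3 ne_0_7 ne_0_5 ne_0_6 (ne_1_2).symm ne_2_3 ne_2_7 ne_2_5 ne_2_6 ne_1_3 ne_1_7 ne_1_5 ne_1_6 ne_3_7 ne_3_5 ne_3_6 (ne_5_7).symm (ne_6_7).symm ne_5_6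
    rw [p132 (v 0) (v 2) (v 1), p231 (v 7) (v 5) (v 6)] at h0
    rcases h0 with h0 | h0 | h0
    · have h1 := key c hfree (v 0) (v 4) (v 3) (v 1) (v 7) (v 5) (v 6) ne_0_4 ne_0_3 ne_0_1 ne_0_7 ne_0_5 ne_0_6 (ne_3_4).symm (ne_1_4).symm ne_4_7 ne_4_5 ne_4_6 (ne_1_3).symm ne_3_7 ne_3_5 ne_3_6 ne_1_7 ne_1_5 ne_1_6 (ne_5_7).symm (ne_6_7).symm ne_5_6
      rw [p132 (v 0) (v 4) (v 3), p213 (v 3) (v 1) (v 7), p231 (v 7) (v 5) (v 6)] at h1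
      rcases h1 with h1 | h1 | h1
      · exact hd1 ((h0).trans h1.symm)
      · exact hd3 (h1)
      · exact hd2 ((h0).trans h1)
    · exact hd2 (h0)
    · have h2 := key c hfree (v 0) (v 2) (v 1) (v 3) (v 7) (v 4) (v 5) ne_0_2 ne_0_1 ne_0_3 ne_0_7 ne_0_4 ne_0_5 (ne_1_2).symm ne_2_3 ne_2_7 ne_2_4 ne_2_5 ne_1_3 ne_1_7 ne_1_4 ne_1_5 ne_3_7 ne_3_4 ne_3_5 (ne_4_7).symm (ne_5_7).symm ne_4_5
      rw [p132 (v 0) (v 2) (v 1), p231 (v 7) (v 4) (v 5)] at h2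
      rcases h2 with h2 | h2 | h2
      · exact hd2 ((h2).trans h0)
      · have h3 := key c hfree (v 0) (v 4) (v 3) (v 1) (v 7) (v 2) (v 5) ne_0_4 ne_0_3 ne_0_1 ne_0_7 ne_0_2 ne_0_5 (ne_3_4).symm (ne_1_4).symm ne_4_7 (ne_2_4).symm ne_4_5 (ne_1_3).symm ne_3_7 (ne_2_3).symm ne_3_5 ne_1_7 ne_1_2 ne_1_5 (ne_2_7).symm (ne_5_7).symm ne_2_5
        rw [p132 (v 0) (v 4) (v 3), p213 (v 3) (v 1) (v 7), p231 (v 7) (v 2) (v 5)] at h3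
        rcases h3 with h3 | h3 | h3
        · exact hd3 ((h3).trans h0)
        · have h4 := key c hfree (v 0) (v 2) (v 1) (v 4) (v 5) (v 6) (v 7) ne_0_2 ne_0_1 ne_0_4 ne_0_5 ne_0_6 ne_0_7 (ne_1_2).symm ne_2_4 ne_2_5 ne_2_6 ne_2_7 ne_1_4 ne_1_5 ne_1_6 ne_1_7 ne_4_5 ne_4_6 ne_4_7 ne_5_6 ne_5_7 ne_6_7
          rw [p132 (v 0) (v 2) (v 1)] at h4
          rcases h4 with h4 | h4 | h4
          · have h5 := key c hfree (v 0) (v 3) (v 4) (v 1) (v 5) (v 6) (v 7) ne_0_3 ne_0_4 ne_0_1 ne_0_5 ne_0_6 ne_0_7 ne_3_4 (ne_1_3).symm ne_3_5 ne_3_6 ne_3_7 (ne_1_4).symm ne_4_5 ne_4_6 ne_4_7 ne_1_5 ne_1_6 ne_1_7 ne_5_6 ne_5_7 ne_6_7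
            rw [p213 (v 4) (v 1) (v 5)] at h5
            rcases h5 with h5 | h5 | h5
            · exact hd1 ((h4).trans h5.symm)
            · exact hd3 (h5)
            · exact hd2 ((h4).trans h5)
          · exact hd2 (h4)
          · have h6 := key c hfree (v 3) (v 7) (v 0) (v 2) (v 1) (v 4) (v 5) ne_3_7 (ne_0_3).symm (ne_2_3).symm (ne_1_3).symm ne_3_4 ne_3_5 (ne_0_7).symm (ne_2_7).symm (ne_1_7).symm (ne_4_7).symm (ne_5_7).symm ne_0_2 ne_0_1 ne_0_4 ne_0_5 (ne_1_2).symm ne_2_4 ne_2_5 ne_1_4 ne_1_5 ne_4_5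
            rw [p312 (v 3) (v 7) (v 0), p132 (v 0) (v 2) (v 1)] at h6
            rcases h6 with h6 | h6 | h6
            · have h7 := key c hfree (v 0) (v 3) (v 7) (v 2) (v 5) (v 1) (v 4) ne_0_3 ne_0_7 ne_0_2 ne_0_5 ne_0_1 ne_0_4 ne_3_7 (ne_2_3).symm ne_3_5 (ne_1_3).symm ne_3_4 (ne_2_7).symm (ne_5_7).symm (ne_1_7).symm (ne_4_7).symm ne_2_5 (ne_1_2).symm ne_2_4 (ne_1_5).symm (ne_4_5).symm ne_1_4
              rw [p231 (v 7) (v 2) (v 5), p231 (v 5) (v 1) (v 4)] at h7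
              rcases h7 with h7 | h7 | h7
              · exact hd1 (((h6.symm).trans h7).trans h3.symm)
              · exact hd2 (((h6.symm).trans h7).trans h4)
              · exact hd3 (((h3).trans h7).trans h4)
            · have h8 := key c hfree (v 1) (v 6) (v 3) (v 0) (v 7) (v 4) (v 5) ne_1_6 ne_1_3 (ne_0_1).symm ne_1_7 ne_1_4 ne_1_5 (ne_3_6).symm (ne_0_6).symm ne_6_7 (ne_4_6).symm (ne_5_6).symm (ne_0_3).symm ne_3_7 ne_3_4 ne_3_5 ne_0_7 ne_0_4 ne_0_5 (ne_4_7).symm (ne_5_7).symm ne_4_5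
              rw [p132 (v 1) (v 6) (v 3), p213 (v 3) (v 0) (v 7), p231 (v 7) (v 4) (v 5)] at h8
              rcases h8 with h8 | h8 | h8
              · have h9 := key c hfree (v 1) (v 6) (v 3) (v 0) (v 4) (v 5) (v 7) ne_1_6 ne_1_3 (ne_0_1).symm ne_1_4 ne_1_5 ne_1_7 (ne_3_6).symm (ne_0_6).symm (ne_4_6).symm (ne_5_6).symm ne_6_7 (ne_0_3).symm ne_3_4 ne_3_5 ne_3_7 ne_0_4 ne_0_5 ne_0_7 ne_4_5 ne_4_7 ne_5_7
                rw [p132 (v 1) (v 6) (v 3), p213 (v 3) (v 0) (v 4)] at h9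
                rcases h9 with h9 | h9 | h9
                · exact hd3 ((((h9.symm).trans h8).trans h6).trans h4)
                · exact hd2 (((((h2).trans h9.symm).trans h8).trans h6).trans h4)
                · exact hd1 ((h2).trans h9.symm)
              · have h10 := key c hfree (v 0) (v 4) (v 3) (v 1) (v 6) (v 5) (v 7) ne_0_4 ne_0_3 ne_0_1 ne_0_6 ne_0_5 ne_0_7 (ne_3_4).symm (ne_1_4).symm ne_4_6 ne_4_5 ne_4_7 (ne_1_3).symm ne_3_6 ne_3_5 ne_3_7 ne_1_6 ne_1_5 ne_1_7 (ne_5_6).symm ne_6_7 ne_5_7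
                rw [p132 (v 0) (v 4) (v 3), p213 (v 3) (v 1) (v 6), p213 (v 6) (v 5) (v 7)] at h10
                rcases h10 with h10 | h10 | h10
                · exact hd1 (((h2).trans h8.symm).trans h10.symm)
                · exact hd3 (h10)
                · exact hd2 (((h2).trans h8.symm).trans h10)
              · exact hd2 ((((h2).trans h8.symm).trans h6).trans h4)
            · exact hd2 ((h6).trans h4)
        · have h11 := key c hfree (v 3) (v 4) (v 0) (v 1) (v 2) (v 5) (v 7) ne_3_4 (ne_0_3).symm (ne_1_3).symm (ne_2_3).symm ne_3_5 ne_3_7 (ne_0_4).symm (ne_1_4).symm (ne_2_4).symm ne_4_5 ne_4_7 ne_0_1 ne_0_2 ne_0_5 ne_0_7 ne_1_2 ne_1_5 ne_1_7 ne_2_5 ne_2_7 ne_5_7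
          rw [p312 (v 3) (v 4) (v 0)] at h11
          rcases h11 with h11 | h11 | h11
          · exact hd1 (h11.symm)
          · exact hd3 (((h11).trans h3.symm).trans h0)
          · exact hd2 (((h11).trans h3.symm).trans h0)
      · have h12 := key c hfree (v 1) (v 2) (v 0) (v 3) (v 4) (v 5) (v 7) ne_1_2 (ne_0_1).symm ne_1_3 ne_1_4 ne_1_5 ne_1_7 (ne_0_2).symm ne_2_3 ne_2_4 ne_2_5 ne_2_7 ne_0_3 ne_0_4 ne_0_5 ne_0_7 ne_3_4 ne_3_5 ne_3_7 ne_4_5 ne_4_7 ne_5_7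
        rw [p312 (v 1) (v 2) (v 0)] at h12
        rcases h12 with h12 | h12 | h12
        · exact hd1 (h12)
        · exact hd2 (((h12).trans h2.symm).trans h0)
        · exact hd3 (((h12).trans h2.symm).trans h0)
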